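/- Let a, b, c be even positive integers. The lattice Λ = {(x,y,z) ∈ ℤ^3 : x ≡ y (mod a), x ≡ z (mod b), y ≡ −z (mod c)} is generated by (a/2, −a/2, a/2), (b/2, b/2, −b/2), and (c/2, c/2, c/2), and its fundamental parallelepiped has volume abc/2. -/

import Mathlib

/-!
Write `a = 2A`, `b = 2B`, `c = 2C`. The three generators lie in `Λ`, and conversely, if
`x - y = 2Am`, `x - z = 2Bn` and `y + z = 2Ck`, then adding and subtracting these equations gives
`(x, y, z) = m (A, -A, A) + n (B, B, -B) + k (C, C, C)`. The determinant of the generator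
matrix is `4ABC = abc / 2`.
-/

def congruenceLattice (a b c : ℤ) : AddSubgroup (ℤ × ℤ × ℤ) where
  carrier := {p | a ∣ p.1 - p.2.1 ∧ b ∣ p.1 - p.2.2 ∧ c ∣ p.2.1 + p.2.2}
  zero_mem' := by simp
  add_mem' := by
    rintro ⟨x, y, z⟩ ⟨u, v, w⟩ ⟨h₁, h₂, h₃⟩ ⟨g₁, g₂, g₃⟩
    refine ⟨?_, ?_, ?_⟩
    · simpa [add_sub_add_comm] using dvd_add h₁ g₁
    · simpa [add_sub_add_comm] using dvd_add h₂ g₂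
    · simpa [add_add_add_comm] using dvd_add h₃ g₃
  neg_mem' := by
    rintro ⟨x, y, z⟩ ⟨h₁, h₂, h₃⟩
    refine ⟨?_, ?_, ?_⟩
    · simpa only [Prod.fst_neg, Prod.snd_neg, neg_sub_neg, dvd_sub_comm] using h₁
    · simpa only [Prod.fst_neg, Prod.snd_neg, neg_sub_neg, dvd_sub_comm] using h₂
    · simpa only [Prod.snd_neg, Prod.fst_neg, ← neg_add, dvd_neg] using h₃

theorem mem_congruenceLattice {a b c : ℤ} {p : ℤ × ℤ × ℤ} :
    p ∈ congruenceLattice a b c ↔ a ∣ p.1 - p.2.1 ∧ b ∣ p.1 - p.2.2 ∧ c ∣ p.2.1 + p.2.2 :=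
  Iff.rfl

theorem exists_eq_zsmul_add_of_mem_congruenceLattice (A B C : ℤ) {p : ℤ × ℤ × ℤ}
    (hp : p ∈ congruenceLattice (2 * A) (2 * B) (2 * C)) :
    ∃ m n k : ℤ, p = m • (A, -A, A) + n • (B, B, -B) + k • (C, C, C) := by
  obtain ⟨x, y, z⟩ := p
  obtain ⟨⟨m, hm⟩, ⟨n, hn⟩, ⟨k, hk⟩⟩ := mem_congruenceLattice.mp hp
  refine ⟨m, n, k, ?_⟩
  simp only [Prod.smul_mk, smul_eq_mul, Prod.mk_add_mk, Prod.mk.injEq]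
  refine ⟨by linarith, by linarith, by linarith⟩

theorem congruenceLattice_eq_closure (A B C : ℤ) :
    congruenceLattice (2 * A) (2 * B) (2 * C) =
      AddSubgroup.closure {(A, -A, A), (B, B, -B), (C, C, C)} := by
  apply le_antisymm
  · intro p hp
    obtain ⟨m, n, k, rfl⟩ := exists_eq_zsmul_add_of_mem_congruenceLattice A B C hp
    refine add_mem (add_mem ?_ ?_) ?_ <;>
      exact zsmul_mem (AddSubgroup.subset_closure (by simp)) _
  · rw [AddSubgroup.closure_le]
    rintro p (rfl | rfl | rfl) <;> simp [mem_congruenceLattice, two_mul]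

theorem det_generatorMatrix (A B C : ℤ) :
    Matrix.det !![A, -A, A; B, B, -B; C, C, C] = 4 * (A * B * C) := by
  rw [Matrix.det_fin_three]
  simp only [Matrix.of_apply, Matrix.cons_val', Matrix.cons_val_zero, Matrix.cons_val_one,
    Matrix.cons_val, Matrix.cons_val_fin_one]
  ring

theorem lattice_even_generators_and_volume (a b c : ℤ)
    (ha : 0 < a) (hb : 0 < b) (hc : 0 < c)
    (hea : Even a) (heb : Even b) (hec : Even c) :
    ({p : ℤ × ℤ × ℤ | a ∣ (p.1 - p.2.1) ∧ b ∣ (p.1 - p.2.2) ∧ c ∣ (p.2.1 + p.2.2)}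
        = (AddSubgroup.closure
            ({(a / 2, -a / 2, a / 2),
              (b / 2, b / 2, -b / 2),
              (c / 2, c / 2, c / 2)} : Set (ℤ × ℤ × ℤ)) : Set (ℤ × ℤ × ℤ))) ∧
      |(Matrix.det !![a / 2, -a / 2, a / 2;
                      b / 2, b / 2, -b / 2;
                      c / 2, c / 2, c / 2])| = a * b * c / 2 := by
  obtain ⟨A, rfl⟩ := hea.two_dvd
  obtain ⟨B, rfl⟩ := heb.two_dvd
  obtain ⟨C, rfl⟩ := hec.two_dvd
  have half : ∀ t : ℤ, 2 * t / 2 = t := fun t => by omega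
  have neg_half : ∀ t : ℤ, -(2 * t) / 2 = -t := fun t => by omega
  simp only [half, neg_half]
  refine ⟨congrArg SetLike.coe (congruenceLattice_eq_closure A B C), ?_⟩
  have hABC : 0 < A * B * C := by
    have : 0 < A := by omega
    have : 0 < B := by omega
    have : 0 < C := by omega
    positivity
  rw [det_generatorMatrix, abs_of_pos (by positivity),
    show 2 * A * (2 * B) * (2 * C) = 2 * (4 * (A * B * C)) by ring,
    Int.mul_ediv_cancel_left _ two_ne_zero]
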